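/- arXiv:1206.1169 — 4 statements merged into one kernel-verified Lean document; each statement's English description precedes it below -/
import Mathlib

section
/- (Uniform Gronwall lemma) Let g, h, y be nonnegative locally integrable functions on (t₀, ∞) with y locally absolutely continuous, satisfying y'(t) ≤ g(t) y(t) + h(t) for t ≥ t₀, and suppose there exist positive constants a₁, a₂, a₃ and r > 0 such that ∫_t^{t+r} g(s) ds ≤ a₁, ∫_t^{t+r} h(s) ds ≤ a₂, and ∫_t^{t+r} y(s) ds ≤ a₃ for all t ≥ t₀. Then y(t+r) ≤ (a₃/r + a₂) e^{a₁} for all t ≥ t₀. -/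
/-!
On a single window `[t, t + r]`, the classical Gronwall lemma bounds `y (t + r)` by
`(y s + ∫ h) e^{∫ g} ≤ (y s + a₂) e^{a₁}` for every starting point `s ∈ [t, t + r]`; averaging this
over `s` replaces `y s` by `(1 / r) ∫ y ≤ a₃ / r`. The classical Gronwall lemma for merely
integrable `g` is proved by showing that `(y a + ∫ h + ∫ g y) e^{-∫ g}` is absolutely continuous
with nonpositive derivative almost everywhere.
-/

open MeasureTheory Set Filter Topology intervalIntegral
open scoped NNReal

theorem LipschitzOnWith.comp_absolutelyContinuousOnInterval {X Y : Type*} [PseudoMetricSpace X]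
    [PseudoMetricSpace Y] {φ : X → Y} {f : ℝ → X} {K : ℝ≥0} {s : Set X} {a b : ℝ}
    (hφ : LipschitzOnWith K φ s) (hf : AbsolutelyContinuousOnInterval f a b)
    (hfs : MapsTo f (uIcc a b) s) : AbsolutelyContinuousOnInterval (φ ∘ f) a b := by
  have hKf := Tendsto.const_mul (K : ℝ) hf
  rw [mul_zero] at hKf
  refine squeeze_zero' (Eventually.of_forall fun E ↦ Finset.sum_nonneg fun _ _ ↦ dist_nonneg) ?_
    hKf
  filter_upwards [mem_inf_of_right (mem_principal_self _)] with E hE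
  rw [Finset.mul_sum]
  gcongr with i hi
  exact hφ.dist_le_mul _ (hfs (hE.1 i hi).1) _ (hfs (hE.1 i hi).2)

theorem ContDiff.comp_absolutelyContinuousOnInterval {E F : Type*} [NormedAddCommGroup E]
    [NormedSpace ℝ E] [ProperSpace E] [NormedAddCommGroup F] [NormedSpace ℝ F] {φ : E → F}
    {f : ℝ → E} {a b : ℝ} (hφ : ContDiff ℝ 1 φ) (hf : AbsolutelyContinuousOnInterval f a b) :
    AbsolutelyContinuousOnInterval (φ ∘ f) a b := by
  obtain ⟨C, hC⟩ := hf.exists_bound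
  obtain ⟨K, hK⟩ := hφ.contDiffOn.exists_lipschitzOnWith one_ne_zero (convex_closedBall 0 C)
    (isCompact_closedBall 0 C)
  exact hK.comp_absolutelyContinuousOnInterval hf fun x hx ↦ mem_closedBall_zero_iff.2 (hC x hx)

theorem AbsolutelyContinuousOnInterval.le_of_ae_deriv_nonpos {f : ℝ → ℝ} {a b : ℝ} (hab : a ≤ b)
    (hf : AbsolutelyContinuousOnInterval f a b) (hf' : ∀ᵐ x, x ∈ Icc a b → deriv f x ≤ 0) :
    f b ≤ f a := by
  rw [← sub_nonpos, ← hf.integral_deriv_eq_sub, ← neg_nonneg, ← intervalIntegral.integral_neg]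
  refine integral_nonneg_of_ae_restrict hab ?_
  filter_upwards [ae_restrict_of_ae hf', ae_restrict_mem measurableSet_Icc] with x hx hxI
  exact neg_nonneg.2 (hx hxI)

theorem le_mul_exp_integral_of_le_add_integral {g y : ℝ → ℝ} {a b C : ℝ} (hab : a ≤ b)
    (hg : IntervalIntegrable g volume a b) (hgy : IntervalIntegrable (fun x ↦ g x * y x) volume a b)
    (hg0 : ∀ x ∈ Icc a b, 0 ≤ g x) (hy : ∀ x ∈ Icc a b, y x ≤ C + ∫ s in a..x, g s * y s) :
    y b ≤ C * Real.exp (∫ s in a..b, g s) := by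
  set G : ℝ → ℝ := fun x ↦ ∫ s in a..x, g s
  set Z : ℝ → ℝ := fun x ↦ ∫ s in a..x, g s * y s
  have hGac := hg.absolutelyContinuousOnInterval_intervalIntegral left_mem_uIcc
  have hZac := hgy.absolutelyContinuousOnInterval_intervalIntegral left_mem_uIcc
  have hW : (C + Z b) * Real.exp (-G b) ≤ (C + Z a) * Real.exp (-G a) := by
    refine AbsolutelyContinuousOnInterval.le_of_ae_deriv_nonpos
      (f := fun x ↦ (C + Z x) * Real.exp (-G x)) hab ?_ ?_
    · exact (contDiffOn_const.absolutelyContinuousOnInterval.fun_add hZac).fun_mul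
        (Real.contDiff_exp.comp_absolutelyContinuousOnInterval hGac.fun_neg)
    · filter_upwards [hg.ae_hasDerivAt_integral, hgy.ae_hasDerivAt_integral] with x hGx hZx hx
      have hxu : x ∈ uIcc a b := Icc_subset_uIcc hx
      rw [(((hZx hxu a left_mem_uIcc).const_add C).fun_mul
        (hGx hxu a left_mem_uIcc).fun_neg.exp).deriv]
      calc _ = g x * (y x - (C + Z x)) * Real.exp (-G x) := by ring
        _ ≤ 0 := mul_nonpos_of_nonpos_of_nonneg
          (mul_nonpos_of_nonneg_of_nonpos (hg0 x hx) (sub_nonpos.2 (hy x hx))) (Real.exp_pos _).le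
  have hZa : Z a = 0 := integral_same
  have hGa : G a = 0 := integral_same
  rw [hZa, hGa, add_zero, neg_zero, Real.exp_zero, mul_one, Real.exp_neg, ← div_eq_mul_inv,
    div_le_iff₀ (Real.exp_pos _)] at hW
  exact (hy b ⟨hab, le_rfl⟩).trans hW

theorem le_mul_exp_integral_of_hasDerivWithinAt_le {g h y y' : ℝ → ℝ} {a b : ℝ} (hab : a ≤ b)
    (hy : ContinuousOn y (Icc a b)) (hy' : ∀ x ∈ Ioo a b, HasDerivWithinAt y (y' x) (Ioi x) x)
    (hg : IntegrableOn g (Icc a b)) (hh : IntegrableOn h (Icc a b))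
    (hg0 : ∀ x ∈ Icc a b, 0 ≤ g x) (hh0 : ∀ x ∈ Icc a b, 0 ≤ h x)
    (hle : ∀ x ∈ Ioo a b, y' x ≤ g x * y x + h x) :
    y b ≤ (y a + ∫ x in a..b, h x) * Real.exp (∫ x in a..b, g x) := by
  have hgy : IntegrableOn (fun x ↦ g x * y x) (Icc a b) := hg.mul_continuousOn hy isCompact_Icc
  refine le_mul_exp_integral_of_le_add_integral hab
    ((intervalIntegrable_iff_integrableOn_Icc_of_le hab).2 hg)
    ((intervalIntegrable_iff_integrableOn_Icc_of_le hab).2 hgy) hg0 fun x hx ↦ ?_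
  have hax : Icc a x ⊆ Icc a b := Icc_subset_Icc_right hx.2
  have hyx := sub_le_integral_of_hasDeriv_right_of_le (φ := fun u ↦ g u * y u + h u) hx.1
    (hy.mono hax) (fun u hu ↦ hy' u ⟨hu.1, hu.2.trans_le hx.2⟩) ((hgy.add hh).mono_set hax)
    (fun u hu ↦ hle u ⟨hu.1, hu.2.trans_le hx.2⟩)
  have hsplit : ∫ u in a..x, (g u * y u + h u) = (∫ u in a..x, g u * y u) + ∫ u in a..x, h u :=
    integral_add ((intervalIntegrable_iff_integrableOn_Icc_of_le hx.1).2 (hgy.mono_set hax))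
      ((intervalIntegrable_iff_integrableOn_Icc_of_le hx.1).2 (hh.mono_set hax))
  have hhx : ∫ u in a..x, h u ≤ ∫ u in a..b, h u :=
    integral_mono_interval le_rfl hx.1 hx.2
      (ae_restrict_of_forall_mem measurableSet_Ioc fun u hu ↦ hh0 u (Ioc_subset_Icc_self hu))
      ((intervalIntegrable_iff_integrableOn_Icc_of_le hab).2 hh)
  linarith

theorem le_div_add_mul_exp_of_integral_le {g h y y' : ℝ → ℝ} {t r a₁ a₂ a₃ : ℝ} (hr : 0 < r)
    (hy : ContinuousOn y (Icc t (t + r)))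
    (hy' : ∀ x ∈ Ioo t (t + r), HasDerivWithinAt y (y' x) (Ioi x) x)
    (hg : IntegrableOn g (Icc t (t + r))) (hh : IntegrableOn h (Icc t (t + r)))
    (hg0 : ∀ x ∈ Icc t (t + r), 0 ≤ g x) (hh0 : ∀ x ∈ Icc t (t + r), 0 ≤ h x)
    (hy0 : ∀ x ∈ Icc t (t + r), 0 ≤ y x) (hle : ∀ x ∈ Ioo t (t + r), y' x ≤ g x * y x + h x)
    (hga : ∫ s in t..t + r, g s ≤ a₁) (hha : ∫ s in t..t + r, h s ≤ a₂)
    (hya : ∫ s in t..t + r, y s ≤ a₃) :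
    y (t + r) ≤ (a₃ / r + a₂) * Real.exp a₁ := by
  have htr : t ≤ t + r := by linarith
  have tail_le : ∀ f : ℝ → ℝ, IntegrableOn f (Icc t (t + r)) → (∀ x ∈ Icc t (t + r), 0 ≤ f x) →
      ∀ s ∈ Icc t (t + r), ∫ x in s..t + r, f x ≤ ∫ x in t..t + r, f x := fun f hf hf0 s hs ↦
    integral_mono_interval hs.1 hs.2 le_rfl
      (ae_restrict_of_forall_mem measurableSet_Ioc fun x hx ↦ hf0 x (Ioc_subset_Icc_self hx))
      ((intervalIntegrable_iff_integrableOn_Icc_of_le htr).2 hf)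
  have hpoint : ∀ s ∈ Icc t (t + r), y (t + r) ≤ (y s + a₂) * Real.exp a₁ := by
    intro s hs
    have hst : Icc s (t + r) ⊆ Icc t (t + r) := Icc_subset_Icc_left hs.1
    calc y (t + r) ≤ (y s + ∫ x in s..t + r, h x) * Real.exp (∫ x in s..t + r, g x) :=
          le_mul_exp_integral_of_hasDerivWithinAt_le hs.2 (hy.mono hst)
            (fun x hx ↦ hy' x ⟨hs.1.trans_lt hx.1, hx.2⟩) (hg.mono_set hst) (hh.mono_set hst)
            (fun x hx ↦ hg0 x (hst hx)) (fun x hx ↦ hh0 x (hst hx))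
            (fun x hx ↦ hle x ⟨hs.1.trans_lt hx.1, hx.2⟩)
      _ ≤ (y s + a₂) * Real.exp a₁ := by
          have hh0' : 0 ≤ ∫ x in s..t + r, h x :=
            integral_nonneg hs.2 fun x hx ↦ hh0 x (hst hx)
          gcongr
          · linarith [hy0 s hs, tail_le h hh hh0 s hs]
          · linarith [tail_le h hh hh0 s hs]
          · linarith [tail_le g hg hg0 s hs]
  have hyi : IntervalIntegrable y volume t (t + r) := hy.intervalIntegrable_of_Icc htr
  have hint := integral_mono_on htr intervalIntegrable_const
    ((hyi.add intervalIntegrable_const).mul_const (Real.exp a₁)) hpoint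
  rw [intervalIntegral.integral_const, intervalIntegral.integral_mul_const,
    integral_add hyi intervalIntegrable_const, intervalIntegral.integral_const, smul_eq_mul,
    smul_eq_mul, add_sub_cancel_left] at hint
  rw [div_add' _ _ _ hr.ne', div_mul_eq_mul_div, le_div_iff₀ hr]
  nlinarith [Real.exp_pos a₁]

theorem stmt_2_general (t₀ r a₁ a₂ a₃ : ℝ) (hr : 0 < r)
    (g h y y' : ℝ → ℝ)
    (hg : ∀ t, t₀ < t → 0 ≤ g t) (hh : ∀ t, t₀ < t → 0 ≤ h t) (hy : ∀ t, t₀ < t → 0 ≤ y t)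
    (hgi : MeasureTheory.LocallyIntegrableOn g (Set.Ioi t₀))
    (hhi : MeasureTheory.LocallyIntegrableOn h (Set.Ioi t₀))
    (hderiv : ∀ t, t₀ ≤ t → HasDerivAt y (y' t) t)
    (hineq : ∀ t, t₀ ≤ t → y' t ≤ g t * y t + h t)
    (hga : ∀ t, t₀ ≤ t → ∫ s in t..(t + r), g s ≤ a₁)
    (hha : ∀ t, t₀ ≤ t → ∫ s in t..(t + r), h s ≤ a₂)
    (hya : ∀ t, t₀ ≤ t → ∫ s in t..(t + r), y s ≤ a₃) :
    ∀ t, t₀ ≤ t → y (t + r) ≤ (a₃ / r + a₂) * Real.exp a₁ := by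
  have hwindow : ∀ s, t₀ < s → y (s + r) ≤ (a₃ / r + a₂) * Real.exp a₁ := by
    intro s hs
    have hsub : Icc s (s + r) ⊆ Ioi t₀ := fun x hx ↦ hs.trans_le hx.1
    exact le_div_add_mul_exp_of_integral_le hr
      (fun x hx ↦ (hderiv x (hsub hx).le).continuousAt.continuousWithinAt)
      (fun x hx ↦ (hderiv x (hsub (Ioo_subset_Icc_self hx)).le).hasDerivWithinAt)
      (hgi.integrableOn_compact_subset hsub isCompact_Icc)
      (hhi.integrableOn_compact_subset hsub isCompact_Icc)
      (fun x hx ↦ hg x (hsub hx)) (fun x hx ↦ hh x (hsub hx)) (fun x hx ↦ hy x (hsub hx))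
      (fun x hx ↦ hineq x (hsub (Ioo_subset_Icc_self hx)).le)
      (hga s hs.le) (hha s hs.le) (hya s hs.le)
  -- At `t = t₀` the integrals over `[t₀, t₀ + r]` may be junk values (no integrability near `t₀`),
  -- so we approach `t` from the right through the continuity of `y`.
  intro t ht
  have hlim : Tendsto (fun s ↦ y (s + r)) (𝓝[>] t) (𝓝 (y (t + r))) :=
    ((hderiv (t + r) (by linarith)).continuousAt.tendsto.comp
      ((continuous_add_const r).tendsto t)).mono_left nhdsWithin_le_nhds
  exact le_of_tendsto hlim (eventually_nhdsWithin_of_forall fun s hs ↦ hwindow s (ht.trans_lt hs))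

/-- Uniform Gronwall lemma. -/
theorem stmt_2 (t₀ r a₁ a₂ a₃ : ℝ) (hr : 0 < r) (ha₁ : 0 < a₁) (ha₂ : 0 < a₂) (ha₃ : 0 < a₃)
    (g h y y' : ℝ → ℝ)
    (hg : ∀ t, t₀ < t → 0 ≤ g t) (hh : ∀ t, t₀ < t → 0 ≤ h t) (hy : ∀ t, t₀ < t → 0 ≤ y t)
    (hgi : MeasureTheory.LocallyIntegrableOn g (Set.Ioi t₀))
    (hhi : MeasureTheory.LocallyIntegrableOn h (Set.Ioi t₀))
    (hyi : MeasureTheory.LocallyIntegrableOn y (Set.Ioi t₀))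
    (hderiv : ∀ t, t₀ ≤ t → HasDerivAt y (y' t) t)
    (hineq : ∀ t, t₀ ≤ t → y' t ≤ g t * y t + h t)
    (hga : ∀ t, t₀ ≤ t → ∫ s in t..(t + r), g s ≤ a₁)
    (hha : ∀ t, t₀ ≤ t → ∫ s in t..(t + r), h s ≤ a₂)
    (hya : ∀ t, t₀ ≤ t → ∫ s in t..(t + r), y s ≤ a₃) :
    ∀ t, t₀ ≤ t → y (t + r) ≤ (a₃ / r + a₂) * Real.exp a₁ :=
  stmt_2_general t₀ r a₁ a₂ a₃ hr g h y y' hg hh hy hgi hhi hderiv hineq hga hha hya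
end

section
/- Let y : [0,∞) → ℝ be nonnegative and absolutely continuous, let Z : [0,∞) → [0,∞) be locally integrable, and suppose y'(t) + ν Z(t) ≤ 2 F √(y(t)) for a.e. t ≥ 0, where ν > 0 and F ≥ 0. If y(t) ≤ ρ² for all t ≥ t₀, then for every r > 0 and every t ≥ t₀, ∫_t^{t+r} Z(s) ds ≤ (ρ² + 2Fρ r)/ν. -/
open MeasureTheory Set Filter

theorem sub_le_integral_of_hasDeriv_right_of_ae_le {f f' g : ℝ → ℝ} {a b : ℝ} (hab : a ≤ b)
    (hcont : ContinuousOn f (Icc a b))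
    (hderiv : ∀ x ∈ Ioo a b, HasDerivWithinAt f (f' x) (Ioi x) x)
    (hg : IntegrableOn g (Icc a b)) (hle : ∀ᵐ x, x ∈ Icc a b → f' x ≤ g x) :
    f b - f a ≤ ∫ x in a..b, g x := by
  -- `max f' g` is a pointwise upper bound for `f'` that agrees with `g` almost everywhere.
  have hmax : ∀ᵐ x, x ∈ Icc a b → max (f' x) (g x) = g x := by
    filter_upwards [hle] with x hx hmem using max_eq_right (hx hmem)
  calc f b - f a ≤ ∫ x in a..b, max (f' x) (g x) :=
        intervalIntegral.sub_le_integral_of_hasDeriv_right_of_le hab hcont hderiv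
          (hg.congr (EventuallyEq.symm ((ae_restrict_iff' measurableSet_Icc).2 hmax)))
          fun x _ => le_max_left _ _
    _ = ∫ x in a..b, g x := intervalIntegral.integral_congr_ae <| by
        filter_upwards [hmax] with x hx hmem
        exact hx (Ioc_subset_Icc_self (by rwa [uIoc_of_le hab] at hmem))

theorem mul_integral_le_of_deriv_add_mul_le {y y' Z : ℝ → ℝ} {ν C a b : ℝ} (hab : a ≤ b)
    (hderiv : ∀ x ∈ Icc a b, HasDerivAt y (y' x) x) (hZ : IntegrableOn Z (Icc a b))
    (hle : ∀ᵐ x, x ∈ Icc a b → y' x + ν * Z x ≤ C) :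
    ν * ∫ x in a..b, Z x ≤ y a - y b + C * (b - a) := by
  have hZ' : IntervalIntegrable Z volume a b :=
    (intervalIntegrable_iff_integrableOn_Icc_of_le hab).2 hZ
  have hdiff : y b - y a ≤ ∫ x in a..b, (C - ν * Z x) := by
    refine sub_le_integral_of_hasDeriv_right_of_ae_le hab
      (fun x hx => (hderiv x hx).continuousAt.continuousWithinAt)
      (fun x hx => (hderiv x (Ioo_subset_Icc_self hx)).hasDerivWithinAt)
      ((integrableOn_const measure_Icc_lt_top.ne).sub (hZ.const_mul ν)) ?_
    filter_upwards [hle] with x hx hmem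
    linarith [hx hmem]
  rw [intervalIntegral.integral_sub intervalIntegrable_const (hZ'.const_mul ν),
    intervalIntegral.integral_const, intervalIntegral.integral_const_mul, smul_eq_mul] at hdiff
  linarith

theorem stmt_3_general (ν F ρ t₀ : ℝ) (hν : 0 < ν) (hF : 0 ≤ F) (hρ : 0 < ρ) (ht₀ : 0 ≤ t₀)
    (y y' Z : ℝ → ℝ)
    (hy : ∀ t, 0 ≤ t → 0 ≤ y t)
    (hZi : LocallyIntegrableOn Z (Set.Ici 0))
    (hderiv : ∀ t, 0 ≤ t → HasDerivAt y (y' t) t)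
    (hineq : ∀ᵐ t ∂(volume : Measure ℝ), 0 ≤ t → y' t + ν * Z t ≤ 2 * F * Real.sqrt (y t))
    (hbound : ∀ t, t₀ ≤ t → y t ≤ ρ ^ 2) :
    ∀ r, 0 < r → ∀ t, t₀ ≤ t → ∫ s in t..(t + r), Z s ≤ (ρ ^ 2 + 2 * F * ρ * r) / ν := by
  intro r hr t ht
  have hsub : Icc t (t + r) ⊆ Ici 0 := fun s hs => ht₀.trans (ht.trans hs.1)
  have hle : ∀ᵐ s, s ∈ Icc t (t + r) → y' s + ν * Z s ≤ 2 * F * ρ := by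
    filter_upwards [hineq] with s hs hmem
    have hsqrt : Real.sqrt (y s) ≤ ρ := (Real.sqrt_le_left hρ.le).2 (hbound s (ht.trans hmem.1))
    calc y' s + ν * Z s ≤ 2 * F * Real.sqrt (y s) := hs (hsub hmem)
      _ ≤ 2 * F * ρ := by gcongr
  have key := mul_integral_le_of_deriv_add_mul_le (by linarith)
    (fun s hs => hderiv s (hsub hs)) (hZi.integrableOn_compact_subset hsub isCompact_Icc) hle
  have hyt := hbound t ht
  have hyb := hy (t + r) (hsub (right_mem_Icc.2 (by linarith)))
  rw [le_div_iff₀ hν]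
  linarith

theorem stmt_3 (ν F ρ t₀ : ℝ) (hν : 0 < ν) (hF : 0 ≤ F) (hρ : 0 < ρ) (ht₀ : 0 ≤ t₀)
    (y y' Z : ℝ → ℝ)
    (hy : ∀ t, 0 ≤ t → 0 ≤ y t)
    (hZ : ∀ t, 0 ≤ t → 0 ≤ Z t)
    (hZi : LocallyIntegrableOn Z (Set.Ici 0))
    (hderiv : ∀ t, 0 ≤ t → HasDerivAt y (y' t) t)
    (hineq : ∀ᵐ t ∂(volume : Measure ℝ), 0 ≤ t → y' t + ν * Z t ≤ 2 * F * Real.sqrt (y t))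
    (hbound : ∀ t, t₀ ≤ t → y t ≤ ρ ^ 2) :
    ∀ r, 0 < r → ∀ t, t₀ ≤ t → ∫ s in t..(t + r), Z s ≤ (ρ ^ 2 + 2 * F * ρ * r) / ν :=
  stmt_3_general ν F ρ t₀ hν hF hρ ht₀ y y' Z hy hZi hderiv hineq hbound
end

section
/- Let μ₀ > 0, ε > 0, 0 ≤ α < 1, and E a symmetric n×n matrix. Then for every symmetric matrix F, Γ(E)|F|² − α A_{ijkl}(E) F_{ij} F_{kl} ≥ (1−α) μ₀ (ε+|E|²)^{-α/2} |F|² ≥ 0; i.e., the linearized viscous term is positive semidefinite when α ∈ [0,1). -/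
/-! The quartic sum is the rank-one form `μ₀ (ε+|E|²)^{-(1+α/2)} ⟨E, F⟩²`. By Cauchy–Schwarz,
`⟨E, F⟩² ≤ |E|² |F|² ≤ (ε+|E|²) |F|²`, so it is at most `Γ(E) |F|²`. -/

open Finset

lemma sum_sum_sum_sum_mul_eq_mul_sq {R ι κ : Type*} [CommSemiring R] [Fintype ι] [Fintype κ]
    (c : R) (E F : Matrix ι κ R) :
    ∑ i, ∑ j, ∑ k, ∑ l, c * E i j * E k l * F i j * F k l
      = c * (∑ i, ∑ j, E i j * F i j) ^ 2 := by
  simp only [sq, mul_sum, sum_mul]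
  exact sum_congr rfl fun i _ => sum_congr rfl fun j _ =>
    sum_congr rfl fun k _ => sum_congr rfl fun l _ => by ring

lemma sq_sum_sum_mul_le {ι κ : Type*} [Fintype ι] [Fintype κ] (E F : Matrix ι κ ℝ) :
    (∑ i, ∑ j, E i j * F i j) ^ 2 ≤ (∑ i, ∑ j, E i j ^ 2) * ∑ i, ∑ j, F i j ^ 2 := by
  simpa only [← Fintype.sum_prod_type'] using
    sum_mul_sq_le_sq_mul_sq univ (fun p : ι × κ => E p.1 p.2) (fun p => F p.1 p.2)

lemma rpow_neg_one_add_mul_le {a s t N : ℝ} (ha : 0 < a) (ht : t ≤ a * N) :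
    a ^ (-(1 + s)) * t ≤ a ^ (-s) * N :=
  calc a ^ (-(1 + s)) * t ≤ a ^ (-(1 + s)) * (a * N) := by gcongr
    _ = a ^ (-(1 + s) + 1) * N := by rw [Real.rpow_add_one ha.ne']; ring
    _ = a ^ (-s) * N := by ring_nf

theorem stmt_8_general (n : ℕ) (μ₀ ε α : ℝ) (hμ : 0 < μ₀) (hε : 0 < ε)
    (hα0 : 0 ≤ α) (hα1 : α < 1)
    (E F : Matrix (Fin n) (Fin n) ℝ)
    (nE2 nF2 : ℝ)
    (hnE2 : nE2 = ∑ i, ∑ j, (E i j) ^ 2)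
    (hnF2 : nF2 = ∑ i, ∑ j, (F i j) ^ 2) :
    μ₀ * (ε + nE2) ^ (-(α / 2)) * nF2
        - α * (∑ i, ∑ j, ∑ k, ∑ l,
            (μ₀ * (ε + nE2) ^ (-(1 + α / 2)) * E i j * E k l) * F i j * F k l)
      ≥ (1 - α) * μ₀ * (ε + nE2) ^ (-(α / 2)) * nF2 ∧
    0 ≤ (1 - α) * μ₀ * (ε + nE2) ^ (-(α / 2)) * nF2 := by
  have hnE2_nonneg : 0 ≤ nE2 := hnE2 ▸ by positivity
  have hnF2_nonneg : 0 ≤ nF2 := hnF2 ▸ by positivity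
  have hcs : (∑ i, ∑ j, E i j * F i j) ^ 2 ≤ (ε + nE2) * nF2 := by
    have := hnE2 ▸ hnF2 ▸ sq_sum_sum_mul_le E F
    nlinarith
  have hdecay := rpow_neg_one_add_mul_le (s := α / 2) (by positivity) hcs
  rw [sum_sum_sum_sum_mul_eq_mul_sq]
  refine ⟨?_, ?_⟩
  · linear_combination mul_le_mul_of_nonneg_left hdecay (mul_nonneg hα0 hμ.le)
  · have := sub_pos.2 hα1
    positivity

theorem stmt_8 (n : ℕ) (hn : 1 ≤ n) (μ₀ ε α : ℝ) (hμ : 0 < μ₀) (hε : 0 < ε)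
    (hα0 : 0 ≤ α) (hα1 : α < 1)
    (E F : Matrix (Fin n) (Fin n) ℝ) (hE : E.IsSymm) (hF : F.IsSymm)
    (nE2 nF2 : ℝ)
    (hnE2 : nE2 = ∑ i, ∑ j, (E i j) ^ 2)
    (hnF2 : nF2 = ∑ i, ∑ j, (F i j) ^ 2) :
    μ₀ * (ε + nE2) ^ (-(α / 2)) * nF2
        - α * (∑ i, ∑ j, ∑ k, ∑ l,
            (μ₀ * (ε + nE2) ^ (-(1 + α / 2)) * E i j * E k l) * F i j * F k l)
      ≥ (1 - α) * μ₀ * (ε + nE2) ^ (-(α / 2)) * nF2 ∧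
    0 ≤ (1 - α) * μ₀ * (ε + nE2) ^ (-(α / 2)) * nF2 :=
  stmt_8_general n μ₀ ε α hμ hε hα0 hα1 E F nE2 nF2 hnE2 hnF2
end

section
/- Let y, Z : [0,∞) → [0,∞) with y absolutely continuous, and suppose y'(t) + 2ν₀ Z(t) ≤ 2|f| √(y(t)) and y(t) ≤ ρ₁² for all t ≥ t₀. Then for every r > 0 and t ≥ t₀: ∫_t^{t+r} Z(s) ds ≤ κ₀(r) := (ρ₁² + 2|f| ρ₁ r)/(2ν₀). -/
open MeasureTheory Set

theorem mul_integral_le_sub_add_of_hasDerivAt {y y' Z : ℝ → ℝ} {a b ν c : ℝ} (hab : a ≤ b)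
    (hderiv : ∀ x ∈ Icc a b, HasDerivAt y (y' x) x) (hZ : IntegrableOn Z (Icc a b))
    (hineq : ∀ x ∈ Ioo a b, y' x + ν * Z x ≤ c) :
    ν * ∫ x in a..b, Z x ≤ y a - y b + c * (b - a) := by
  have hZi : IntervalIntegrable Z volume a b :=
    (intervalIntegrable_iff_integrableOn_Icc_of_le hab).mpr hZ
  have hgrowth : y b - y a ≤ ∫ x in a..b, (c - ν * Z x) :=
    intervalIntegral.sub_le_integral_of_hasDeriv_right_of_le hab
      (fun x hx => (hderiv x hx).continuousAt.continuousWithinAt)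
      (fun x hx => (hderiv x (Ioo_subset_Icc_self hx)).hasDerivWithinAt)
      ((integrable_const c).sub (hZ.const_mul ν))
      (fun x hx => by linarith [hineq x hx])
  rw [intervalIntegral.integral_sub intervalIntegrable_const (hZi.const_mul ν),
    intervalIntegral.integral_const, intervalIntegral.integral_const_mul, smul_eq_mul] at hgrowth
  linarith

theorem stmt_11_general (ν₀ nf ρ₁ t₀ : ℝ) (hν₀ : 0 < ν₀) (hnf : 0 ≤ nf) (hρ₁ : 0 < ρ₁) (ht₀ : 0 ≤ t₀)
    (y y' Z : ℝ → ℝ)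
    (hy : ∀ t, 0 ≤ t → 0 ≤ y t)
    (hZi : LocallyIntegrableOn Z (Set.Ici 0))
    (hderiv : ∀ t, 0 ≤ t → HasDerivAt y (y' t) t)
    (hineq : ∀ t, 0 ≤ t → y' t + 2 * ν₀ * Z t ≤ 2 * nf * Real.sqrt (y t))
    (hbound : ∀ t, t₀ ≤ t → y t ≤ ρ₁ ^ 2) :
    ∀ r, 0 < r → ∀ t, t₀ ≤ t →
      ∫ s in t..(t + r), Z s ≤ (ρ₁ ^ 2 + 2 * nf * ρ₁ * r) / (2 * ν₀) := by
  intro r hr t ht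
  have hnonneg : ∀ x ∈ Icc t (t + r), 0 ≤ x := fun x hx => ht₀.trans (ht.trans hx.1)
  have hZ : IntegrableOn Z (Icc t (t + r)) :=
    hZi.integrableOn_compact_subset (fun x hx => hnonneg x hx) isCompact_Icc
  have hineq' : ∀ x ∈ Ioo t (t + r), y' x + 2 * ν₀ * Z x ≤ 2 * nf * ρ₁ := fun x hx => by
    have hsqrt : Real.sqrt (y x) ≤ ρ₁ :=
      Real.sqrt_le_iff.mpr ⟨hρ₁.le, hbound x (ht.trans hx.1.le)⟩
    nlinarith [hineq x (hnonneg x (Ioo_subset_Icc_self hx))]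
  have hint := mul_integral_le_sub_add_of_hasDerivAt (by linarith)
    (fun x hx => hderiv x (hnonneg x hx)) hZ hineq'
  have hyt : y t ≤ ρ₁ ^ 2 := hbound t ht
  have hytr : 0 ≤ y (t + r) := hy _ (hnonneg _ (right_mem_Icc.mpr (by linarith)))
  rw [le_div_iff₀ (by linarith)]
  linarith

theorem stmt_11 (ν₀ nf ρ₁ t₀ : ℝ) (hν₀ : 0 < ν₀) (hnf : 0 ≤ nf) (hρ₁ : 0 < ρ₁) (ht₀ : 0 ≤ t₀)
    (y y' Z : ℝ → ℝ)
    (hy : ∀ t, 0 ≤ t → 0 ≤ y t)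
    (hZ : ∀ t, 0 ≤ t → 0 ≤ Z t)
    (hZi : LocallyIntegrableOn Z (Set.Ici 0))
    (hderiv : ∀ t, 0 ≤ t → HasDerivAt y (y' t) t)
    (hineq : ∀ t, 0 ≤ t → y' t + 2 * ν₀ * Z t ≤ 2 * nf * Real.sqrt (y t))
    (hbound : ∀ t, t₀ ≤ t → y t ≤ ρ₁ ^ 2) :
    ∀ r, 0 < r → ∀ t, t₀ ≤ t →
      ∫ s in t..(t + r), Z s ≤ (ρ₁ ^ 2 + 2 * nf * ρ₁ * r) / (2 * ν₀) :=
  stmt_11_general ν₀ nf ρ₁ t₀ hν₀ hnf hρ₁ ht₀ y y' Z hy hZi hderiv hineq hbound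
end
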